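/- Let G=(V,E) be a graph, v ∈ V, k ∈ ℕ, w: V → ℕ⁺ a weight function, and P a set of restricted P4's of G each containing v, such that every vertex u ≠ v is contained in at most w(u) many paths of P. If |P| ≥ k+1, then every 2-club vertex deletion set S with w(S) ≤ k must contain v. -/

import Mathlib

open SimpleGraph

/-- A 2-club cluster graph: every connected component has diameter at most 2. -/
def IsTwoClubCluster {V : Type*} (G : SimpleGraph V) : Prop :=
  ∀ x y : V, G.Reachable x y → G.dist x y ≤ 2

/-- A 2-club: a graph of diameter at most 2, i.e. every two distinct vertices are
adjacent or have a common neighbor. -/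
def IsTwoClub {V : Type*} (G : SimpleGraph V) : Prop :=
  ∀ x y : V, x ≠ y → G.Adj x y ∨ ∃ z, G.Adj x z ∧ G.Adj y z

/-- A restricted P4: a path s-t-u-v on four distinct vertices with dist(s,v) = 3. -/
def IsRestrictedP4 {V : Type*} (G : SimpleGraph V) (s t u v : V) : Prop :=
  s ≠ t ∧ s ≠ u ∧ s ≠ v ∧ t ≠ u ∧ t ≠ v ∧ u ≠ v ∧
  G.Adj s t ∧ G.Adj t u ∧ G.Adj u v ∧ G.dist s v = 3

/-!
If `v ∉ S`, every path of `P` must lose a vertex `u ∈ S`, and `u ≠ v`. Each such `u` lies on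
at most `w u` paths of `P`, so `|P| ≤ w(S) ≤ k`.
-/

open Finset

lemma Finset.card_le_sum_card_filter_of_forall_exists {α β : Type*} [DecidableEq α]
    (r : β → α → Prop) [∀ u, DecidablePred (r u)] {P : Finset α} {S : Finset β}
    (h : ∀ p ∈ P, ∃ u ∈ S, r u p) : #P ≤ ∑ u ∈ S, #(P.filter (r u)) :=
  calc #P ≤ #(S.biUnion fun u => P.filter (r u)) := card_le_card fun p hp => by
        obtain ⟨u, hu, hup⟩ := h p hp
        exact mem_biUnion.2 ⟨u, hu, mem_filter.2 ⟨hp, hup⟩⟩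
    _ ≤ ∑ u ∈ S, #(P.filter (r u)) := card_biUnion_le

lemma SimpleGraph.Reachable.dist_map_le {V W : Type*} {G : SimpleGraph V} {G' : SimpleGraph W}
    (f : G →g G') {u v : V} (h : G.Reachable u v) : G'.dist (f u) (f v) ≤ G.dist u v := by
  obtain ⟨q, hq⟩ := h.exists_walk_length_eq_dist
  simpa [hq] using dist_le (q.map f)

section

variable {V : Type*} {G : SimpleGraph V} {s : Set V}

lemma IsTwoClubCluster.dist_le_two (hs : IsTwoClubCluster (G.induce s)) {x y : s}
    (h : (G.induce s).Reachable x y) : G.dist x y ≤ 2 :=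
  (h.dist_map_le (Embedding.induce s).toHom).trans (hs x y h)

lemma IsRestrictedP4.exists_not_mem {a b c d : V} (hP : IsRestrictedP4 G a b c d)
    (hs : IsTwoClubCluster (G.induce s)) :
    ∃ x ∉ s, x = a ∨ x = b ∨ x = c ∨ x = d := by
  obtain ⟨-, -, -, -, -, -, hab, hbc, hcd, hdist⟩ := hP
  by_contra h
  have mem : ∀ x, (x = a ∨ x = b ∨ x = c ∨ x = d) → x ∈ s := fun x hx =>
    by_contra fun hxs => h ⟨x, hxs, hx⟩
  have ha := mem a (.inl rfl)
  have hb := mem b (.inr (.inl rfl))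
  have hc := mem c (.inr (.inr (.inl rfl)))
  have hd := mem d (.inr (.inr (.inr rfl)))
  have hreach : (G.induce s).Reachable ⟨a, ha⟩ ⟨d, hd⟩ :=
    ((show (G.induce s).Adj ⟨a, ha⟩ ⟨b, hb⟩ from hab).reachable.trans
      (show (G.induce s).Adj ⟨b, hb⟩ ⟨c, hc⟩ from hbc).reachable).trans
      (show (G.induce s).Adj ⟨c, hc⟩ ⟨d, hd⟩ from hcd).reachable
  have : G.dist a d ≤ 2 := hs.dist_le_two hreach
  omega

end

theorem stmt7_general {V : Type*} [DecidableEq V] (G : SimpleGraph V) (v : V) (k : ℕ)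
    (w : V → ℕ)
    (P : Finset (V × V × V × V))
    (hP : ∀ p ∈ P, IsRestrictedP4 G p.1 p.2.1 p.2.2.1 p.2.2.2)
    (hcnt : ∀ u : V, u ≠ v →
      (P.filter (fun p => u = p.1 ∨ u = p.2.1 ∨ u = p.2.2.1 ∨ u = p.2.2.2)).card ≤ w u)
    (hcard : k + 1 ≤ P.card)
    (S : Finset V) (hS : IsTwoClubCluster (G.induce ((↑S : Set V)ᶜ)))
    (hwS : ∑ x ∈ S, w x ≤ k) :
    v ∈ S := by
  by_contra hv
  have hit : ∀ p ∈ P, ∃ u ∈ S, u = p.1 ∨ u = p.2.1 ∨ u = p.2.2.1 ∨ u = p.2.2.2 := by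
    intro p hp
    obtain ⟨u, hu, hup⟩ := (hP p hp).exists_not_mem hS
    exact ⟨u, by simpa using hu, hup⟩
  have := calc k + 1 ≤ #P := hcard
    _ ≤ ∑ u ∈ S, #(P.filter fun p => u = p.1 ∨ u = p.2.1 ∨ u = p.2.2.1 ∨ u = p.2.2.2) :=
      card_le_sum_card_filter_of_forall_exists _ hit
    _ ≤ ∑ u ∈ S, w u := sum_le_sum fun u hu => hcnt u (ne_of_mem_of_not_mem hu hv)
    _ ≤ k := hwS
  omega

theorem stmt7 {V : Type*} [Fintype V] [DecidableEq V] (G : SimpleGraph V) (v : V) (k : ℕ)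
    (w : V → ℕ) (hw : ∀ x, 1 ≤ w x)
    (P : Finset (V × V × V × V))
    (hP : ∀ p ∈ P, IsRestrictedP4 G p.1 p.2.1 p.2.2.1 p.2.2.2)
    (hvP : ∀ p ∈ P, v = p.1 ∨ v = p.2.1 ∨ v = p.2.2.1 ∨ v = p.2.2.2)
    (hcnt : ∀ u : V, u ≠ v →
      (P.filter (fun p => u = p.1 ∨ u = p.2.1 ∨ u = p.2.2.1 ∨ u = p.2.2.2)).card ≤ w u)
    (hcard : k + 1 ≤ P.card)
    (S : Finset V) (hS : IsTwoClubCluster (G.induce ((↑S : Set V)ᶜ)))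
    (hwS : ∑ x ∈ S, w x ≤ k) :
    v ∈ S :=
  stmt7_general G v k w P hP hcnt hcard S hS hwS
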